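/- Pointwise bound used in Hölder-type compatibility: for 1 < p ≤ 2 and all real u, v, one has (|u|^{p-1} sign(u) − |v|^{p-1} sign(v))(u − v) ≥ c_p |u − v|^p for some constant c_p > 0 depending only on p; in particular the inequality holds with c_p = 2^{p-2} when additionally u·v ≤ 0. -/

import Mathlib

/-! When `u ≥ 0 ≥ v` we have `|u - v| = a + b` with `a = u`, `b = -v`, and the left-hand side is
`(a ^ (p - 1) + b ^ (p - 1)) * (a + b)`. Subadditivity of the concave power `t ↦ t ^ (p - 1)`
bounds this below by `(a + b) ^ p`, which dominates `2 ^ (p - 2) * (a + b) ^ p` since `p ≤ 2`. -/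

namespace Real

lemma abs_rpow_mul_sign_of_nonneg {q u : ℝ} (hq : q ≠ 0) (hu : 0 ≤ u) :
    |u| ^ q * sign u = u ^ q := by
  rcases hu.eq_or_lt with rfl | hu
  · simp [zero_rpow hq]
  · rw [abs_of_pos hu, sign_of_pos hu, mul_one]

lemma abs_rpow_mul_sign_of_nonpos {q v : ℝ} (hq : q ≠ 0) (hv : v ≤ 0) :
    |v| ^ q * sign v = -(-v) ^ q := by
  rw [← abs_neg, ← abs_rpow_mul_sign_of_nonneg hq (neg_nonneg.mpr hv), sign_neg, mul_neg, neg_neg]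

lemma rpow_le_add_rpow_sub_one_mul_add {p a b : ℝ} (hp1 : 1 ≤ p) (hp2 : p ≤ 2)
    (ha : 0 ≤ a) (hb : 0 ≤ b) :
    (a + b) ^ p ≤ (a ^ (p - 1) + b ^ (p - 1)) * (a + b) := by
  have hab : 0 ≤ a + b := add_nonneg ha hb
  calc (a + b) ^ p = (a + b) ^ (p - 1) * (a + b) := by
        rw [← rpow_add_one' hab (by linarith), sub_add_cancel]
    _ ≤ (a ^ (p - 1) + b ^ (p - 1)) * (a + b) := by
        gcongr
        exact rpow_add_le_add_rpow ha hb (by linarith) (by linarith)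

end Real

open Real

lemma signed_rpow_sub_mul_sub_ge_of_nonneg_of_nonpos {p u v : ℝ} (hp1 : 1 < p) (hp2 : p ≤ 2)
    (hu : 0 ≤ u) (hv : v ≤ 0) :
    (|u| ^ (p - 1) * sign u - |v| ^ (p - 1) * sign v) * (u - v) ≥
      (2 : ℝ) ^ (p - 2) * |u - v| ^ p := by
  have hq : p - 1 ≠ 0 := by linarith
  rw [abs_rpow_mul_sign_of_nonneg hq hu, abs_rpow_mul_sign_of_nonpos hq hv,
    abs_of_nonneg (by linarith : 0 ≤ u - v), sub_neg_eq_add, sub_eq_add_neg]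
  have hnv : 0 ≤ -v := neg_nonneg.mpr hv
  calc (2 : ℝ) ^ (p - 2) * (u + -v) ^ p ≤ (u + -v) ^ p :=
        mul_le_of_le_one_left (rpow_nonneg (add_nonneg hu hnv) p)
          (rpow_le_one_of_one_le_of_nonpos one_le_two (by linarith))
    _ ≤ (u ^ (p - 1) + (-v) ^ (p - 1)) * (u + -v) :=
        rpow_le_add_rpow_sub_one_mul_add hp1.le hp2 hu hnv

theorem holder_compatibility_pointwise (p : ℝ) (hp1 : 1 < p) (hp2 : p ≤ 2)
    (u v : ℝ) (huv : u * v ≤ 0) :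
    (|u| ^ (p - 1) * Real.sign u - |v| ^ (p - 1) * Real.sign v) * (u - v) ≥
      (2 : ℝ) ^ (p - 2) * |u - v| ^ p := by
  rcases mul_nonpos_iff.mp huv with ⟨hu, hv⟩ | ⟨hu, hv⟩
  · exact signed_rpow_sub_mul_sub_ge_of_nonneg_of_nonpos hp1 hp2 hu hv
  · have h := signed_rpow_sub_mul_sub_ge_of_nonneg_of_nonpos hp1 hp2 hv hu
    rw [abs_sub_comm] at h
    linarith
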